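/- Let A be an n×n complex positive definite matrix and B an n×n positive semidefinite matrix. Then det(I + |ABA^{-1}|²) ≥ det(I + B²), where |ABA^{-1}| = ((ABA^{-1})*(ABA^{-1}))^{1/2} = (A^{-1}BA²BA^{-1})^{1/2}. -/

import Mathlib

open scoped ComplexOrder Matrix Classical

/-- The positive semidefinite square root of a positive semidefinite matrix
(junk value `0` if the matrix is not positive semidefinite). -/
noncomputable def sqrtm {n : ℕ} (A : Matrix (Fin n) (Fin n) ℂ) : Matrix (Fin n) (Fin n) ℂ :=
  if h : A.PosSemidef then
    (h.1.eigenvectorUnitary : Matrix (Fin n) (Fin n) ℂ) *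
      Matrix.diagonal ((↑) ∘ (Real.sqrt ·) ∘ h.1.eigenvalues) *
      (star h.1.eigenvectorUnitary : Matrix (Fin n) (Fin n) ℂ)
  else 0

/-- The absolute value `|X| = (Xᴴ X)^{1/2}` of a matrix. -/
noncomputable def absm {n : ℕ} (X : Matrix (Fin n) (Fin n) ℂ) : Matrix (Fin n) (Fin n) ℂ :=
  sqrtm (Xᴴ * X)
/-!
Put `X = A B A⁻¹`. Then `|X|² = Xᴴ X`, and `1 + X² = A (1 + B²) A⁻¹` has determinant
`det (1 + B²) ≥ 0`. The block matrix `[[1 + X Xᴴ, 1 + X²], [(1 + X²)ᴴ, 1 + Xᴴ X]]` equals `M Mᴴ`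
for `M = [[1, X], [1, Xᴴ]]`, so it is positive semidefinite and so is its Schur complement.
Since `det` is monotone on positive semidefinite matrices, this gives
`|det (1 + X²)|² ≤ det (1 + X Xᴴ) det (1 + Xᴴ X) = det (1 + Xᴴ X)²`.
-/

open Matrix

lemma sqrtm_mul_self {n : ℕ} {A : Matrix (Fin n) (Fin n) ℂ} (h : A.PosSemidef) :
    sqrtm A * sqrtm A = A := by
  have hsqrt : sqrtm A = Unitary.conjStarAlgAut ℂ _ h.1.eigenvectorUnitary
      (diagonal ((↑) ∘ (Real.sqrt ·) ∘ h.1.eigenvalues)) := by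
    rw [sqrtm, dif_pos h, Unitary.conjStarAlgAut_apply]
  conv_rhs => rw [h.1.spectral_theorem]
  rw [hsqrt, ← map_mul, diagonal_mul_diagonal]
  congr 2
  funext i
  simp [← Complex.ofReal_mul, Real.mul_self_sqrt (h.eigenvalues_nonneg i)]

namespace RCLike

variable {𝕜 : Type*} [RCLike 𝕜]

lemma le_of_mul_self_le_mul_self {a b : 𝕜} (ha : 0 ≤ a) (hb : 0 ≤ b) (h : a * a ≤ b * b) :
    a ≤ b := by
  obtain ⟨x, -, rfl⟩ := nonneg_iff_exists_ofReal.mp ha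
  obtain ⟨y, hy, rfl⟩ := nonneg_iff_exists_ofReal.mp hb
  rw [← ofReal_mul, ← ofReal_mul, ofReal_le_ofReal] at h
  exact ofReal_le_ofReal.mpr (nonneg_le_nonneg_of_sq_le_sq hy h)

end RCLike

namespace Matrix

open scoped MatrixOrder

variable {n 𝕜 : Type*} [Fintype n] [DecidableEq n] [RCLike 𝕜]

lemma PosSemidef.one_le_det_one_add {T : Matrix n n 𝕜} (hT : T.PosSemidef) :
    1 ≤ (1 + T).det := by
  have hspec : 1 + T = Unitary.conjStarAlgAut 𝕜 _ hT.1.eigenvectorUnitary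
      (diagonal fun i ↦ 1 + (hT.1.eigenvalues i : 𝕜)) := by
    conv_lhs => rw [hT.1.spectral_theorem]
    rw [← map_one (Unitary.conjStarAlgAut 𝕜 (Matrix n n 𝕜) hT.1.eigenvectorUnitary), ← map_add,
      ← diagonal_one, diagonal_add]
    rfl
  rw [hspec, Unitary.conjStarAlgAut_apply, det_conj_of_mul_eq_one (Unitary.coe_mul_star_self _)
    (Unitary.coe_star_mul_self _), det_diagonal]
  exact Finset.one_le_prod fun i _ ↦
    le_add_of_nonneg_right (RCLike.ofReal_nonneg.mpr (hT.eigenvalues_nonneg i))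

lemma det_le_det_of_le {D E : Matrix n n 𝕜} (hD : 0 ≤ D) (hDE : D ≤ E) : D.det ≤ E.det := by
  rw [nonneg_iff_posSemidef] at hD
  rw [le_iff] at hDE
  by_cases hdet : D.det = 0
  · rw [hdet]
    simpa using (hDE.add hD).det_nonneg
  obtain ⟨Z, hZ⟩ := CStarAlgebra.nonneg_iff_eq_star_mul_self.mp hDE.nonneg
  have hE : E = D + Zᴴ * Z := by rw [← star_eq_conjTranspose, ← hZ, add_sub_cancel]
  have hT : (Z * D⁻¹ * Zᴴ).PosSemidef :=
    (hD.posDef_iff_det_ne_zero.mpr hdet).inv.posSemidef.mul_mul_conjTranspose_same Z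
  rw [hE, det_add_mul _ _ (Ne.isUnit hdet)]
  exact le_mul_of_one_le_right hD.det_nonneg hT.one_le_det_one_add

lemma star_det_mul_det_le_det_mul_det {P Q R : Matrix n n 𝕜} (hP : P.PosDef)
    (h : (fromBlocks P R Rᴴ Q).PosSemidef) : star R.det * R.det ≤ P.det * Q.det := by
  let := hP.isUnit.invertible
  have hSchur : (Q - Rᴴ * P⁻¹ * R).PosSemidef := (PosDef.fromBlocks₁₁ R Q hP).mp h
  have hMid : (Rᴴ * P⁻¹ * R).PosSemidef := hP.inv.posSemidef.conjTranspose_mul_mul_same R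
  calc star R.det * R.det = P.det * (Rᴴ * P⁻¹ * R).det := by
        rw [det_mul, det_mul, det_conjTranspose, det_nonsing_inv, Ring.inverse_eq_inv]
        field_simp [hP.det_pos.ne']
    _ ≤ P.det * Q.det :=
        mul_le_mul_of_nonneg_left (det_le_det_of_le hMid.nonneg (le_iff.mpr hSchur))
          hP.det_pos.le

lemma star_det_one_add_mul_self_mul_det_le (X : Matrix n n 𝕜) :
    star (1 + X * X).det * (1 + X * X).det ≤ (1 + Xᴴ * X).det * (1 + Xᴴ * X).det := by
  have hblocks : fromBlocks (1 + X * Xᴴ) (1 + X * X) (1 + X * X)ᴴ (1 + Xᴴ * X)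
      = fromBlocks 1 X 1 Xᴴ * (fromBlocks 1 X 1 Xᴴ)ᴴ := by
    simp [fromBlocks_conjTranspose, fromBlocks_multiply, conjTranspose_add]
  have h := star_det_mul_det_le_det_mul_det
    (PosDef.one.add_posSemidef (posSemidef_self_mul_conjTranspose X))
    (hblocks ▸ posSemidef_self_mul_conjTranspose _)
  rwa [det_one_add_mul_comm X Xᴴ] at h

end Matrix

/-- For positive definite `A` and positive semidefinite `B`,
`det(I + |A B A⁻¹|²) ≥ det(I + B²)`. -/
theorem det_one_add_sq_le_det_one_add_abs_conj_sq {n : ℕ}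
    (A B : Matrix (Fin n) (Fin n) ℂ) (hA : A.PosDef) (hB : B.PosSemidef) :
    (1 + B ^ 2).det ≤ (1 + absm (A * B * A⁻¹) ^ 2).det := by
  set X := A * B * A⁻¹
  have hXX : (Xᴴ * X).PosSemidef := posSemidef_conjTranspose_mul_self X
  have habs : absm X ^ 2 = Xᴴ * X := by rw [absm, sq, sqrtm_mul_self hXX]
  have hAdet : IsUnit A.det := hA.det_pos.ne'.isUnit
  have hconj : 1 + X * X = A * (1 + B ^ 2) * A⁻¹ := by
    rw [Matrix.mul_add, Matrix.add_mul, Matrix.mul_one, mul_nonsing_inv _ hAdet, sq]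
    simp only [X, Matrix.mul_assoc, nonsing_inv_mul_cancel_left _ _ hAdet]
  have hdet : (1 + X * X).det = (1 + B ^ 2).det := by rw [hconj, det_conj hA.isUnit]
  have hr : 0 ≤ (1 + B ^ 2).det := (PosSemidef.one.add (hB.pow 2)).det_nonneg
  rw [habs]
  refine RCLike.le_of_mul_self_le_mul_self hr (PosSemidef.one.add hXX).det_nonneg ?_
  simpa [hdet, (IsSelfAdjoint.of_nonneg hr).star_eq] using star_det_one_add_mul_self_mul_det_le X
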